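/- arXiv:1612.09260 — 2 statements merged into one kernel-verified Lean document; each statement's English description precedes it below -/
import Mathlib

section
/- In the partially reduced basis, for all α, β, γ ∈ μ: Σ_{a=1}^{n} Σ_{k=1}^{d_β} (φ^μ_R)^{αβ}_{i k}((a,n))·(φ^μ_R)^{βγ}_{k j}((a,n)) = n·(d_β/d_μ)·δ^{αγ}·δ_{ij}. -/
/-- Irreducibility of a matrix representation: the only invariant subspaces of `I → ℂ`
are `⊥` and `⊤`. -/
def MatRepIrreducible {G I : Type*} [Monoid G] [Fintype I] [DecidableEq I]
    (φ : G →* Matrix I I ℂ) : Prop :=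
  ∀ W : Submodule ℂ (I → ℂ), (∀ g : G, ∀ v ∈ W, (φ g).mulVec v ∈ W) → W = ⊥ ∨ W = ⊤

/-- The embedding of `S(m)` into `S(m+1)` as the permutations fixing the last element. -/
def embedLast {m : ℕ} (τ : Equiv.Perm (Fin m)) : Equiv.Perm (Fin (m + 1)) :=
  τ.viaFintypeEmbedding Fin.castSuccEmb

/-- The `(α,β)`-block of a matrix, for a block structure `blk : I → ι` on the index set. -/
def blkOf {I ι : Type*} (blk : I → ι) (A : Matrix I I ℂ) (α β : ι) :
    Matrix {p : I // blk p = α} {q : I // blk q = β} ℂ :=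
  Matrix.of fun p q => A p.val q.val

/-!
Let `P` be the diagonal projection onto the block `β`. Since `φ` is block diagonal on `S(m)`,
`P` commutes with `φ(S(m))`, so in the decomposition `S(m+1) = ⋃ₐ (a, m+1) S(m)` all elements of
a coset contribute the same term to `∑_σ φ(σ) P φ(σ)⁻¹`, and this sum equals
`m! ∑ₐ φ((a, m+1)) P φ((a, m+1))`. By Schur's lemma the full group average is the scalar
`(m+1)! tr P / d_μ = (m+1)! d_β / d_μ`; dividing by `m!` and reading off the `(p, r)` entry gives
the sum rule.
-/

open Equiv Finset
open scoped Matrix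

lemma embedLast_eq_viaEmbeddingHom {m : ℕ} (τ : Perm (Fin m)) :
    embedLast τ = Perm.viaEmbeddingHom Fin.castSuccEmb τ := by
  refine Equiv.ext fun x => ?_
  cases x using Fin.lastCases with
  | last =>
    have h : Fin.last m ∉ Set.range Fin.castSuccEmb := by
      rintro ⟨i, hi⟩
      exact (Fin.castSucc_lt_last i).ne hi
    rw [Perm.viaEmbeddingHom_apply, Perm.viaEmbedding_apply_of_notMem _ _ _ h, embedLast,
      Perm.viaFintypeEmbedding_apply_notMem_range _ _ h]
  | cast i =>
    rw [Perm.viaEmbeddingHom_apply]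
    exact (Perm.viaFintypeEmbedding_apply_image τ Fin.castSuccEmb i).trans
      (Perm.viaEmbedding_apply τ Fin.castSuccEmb i).symm

lemma embedLast_inv {m : ℕ} (τ : Perm (Fin m)) : embedLast τ⁻¹ = (embedLast τ)⁻¹ := by
  simp only [embedLast_eq_viaEmbeddingHom, map_inv]

lemma embedLast_injective {m : ℕ} : Function.Injective (embedLast (m := m)) := by
  intro σ τ h
  simp only [embedLast_eq_viaEmbeddingHom] at h
  exact Perm.viaEmbeddingHom_injective _ h

lemma embedLast_apply_last {m : ℕ} (τ : Perm (Fin m)) : embedLast τ (Fin.last m) = Fin.last m :=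
  Perm.viaFintypeEmbedding_apply_notMem_range _ _ fun ⟨i, hi⟩ => (Fin.castSucc_lt_last i).ne hi

lemma bijective_swap_last_mul_embedLast (m : ℕ) :
    Function.Bijective fun x : Fin (m + 1) × Perm (Fin m) =>
      swap x.1 (Fin.last m) * embedLast x.2 := by
  rw [Fintype.bijective_iff_injective_and_card]
  refine ⟨?_, by simp [Fintype.card_perm, Nat.factorial_succ]⟩
  rintro ⟨a, σ⟩ ⟨b, τ⟩ h
  have hab : a = b := by
    simpa [Perm.mul_apply, embedLast_apply_last] using congrArg (· (Fin.last m)) h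
  subst hab
  exact Prod.ext rfl (embedLast_injective (mul_left_cancel h))

lemma sum_perm_eq_sum_swap_last_mul_embedLast {M : Type*} [AddCommMonoid M] (m : ℕ)
    (f : Perm (Fin (m + 1)) → M) :
    ∑ σ, f σ = ∑ a, ∑ τ, f (swap a (Fin.last m) * embedLast τ) := by
  rw [← Fintype.sum_prod_type']
  exact (Fintype.sum_bijective _ (bijective_swap_last_mul_embedLast m) _ _ fun _ => rfl).symm

namespace MatRepIrreducible

variable {G I : Type*} [Fintype I] [DecidableEq I] [Nonempty I]

theorem eq_smul_one_of_commute [Monoid G] {φ : G →* Matrix I I ℂ} (hφ : MatRepIrreducible φ)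
    {M : Matrix I I ℂ} (hM : ∀ g, Commute (φ g) M) : ∃ c : ℂ, M = c • 1 := by
  obtain ⟨c, hc⟩ := Module.End.exists_eigenvalue M.mulVecLin
  refine ⟨c, ?_⟩
  have hinv : ∀ g, ∀ v ∈ Module.End.eigenspace M.mulVecLin c, (φ g) *ᵥ v ∈
      Module.End.eigenspace M.mulVecLin c := by
    intro g v hv
    rw [Module.End.mem_eigenspace_iff] at hv ⊢
    change M *ᵥ v = c • v at hv
    change M *ᵥ (φ g *ᵥ v) = c • (φ g *ᵥ v)
    rw [Matrix.mulVec_mulVec, ← (hM g).eq, ← Matrix.mulVec_mulVec, hv, Matrix.mulVec_smul]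
  obtain h | h := hφ _ hinv
  · exact absurd h hc
  · ext i j
    have hj : M *ᵥ Pi.single j 1 = c • Pi.single j 1 :=
      Module.End.mem_eigenspace_iff.mp (h ▸ Submodule.mem_top)
    simpa [Matrix.one_apply, Pi.single_apply, eq_comm] using congrFun hj i

theorem sum_conj_eq_smul_one [Group G] [Fintype G] {φ : G →* Matrix I I ℂ}
    (hφ : MatRepIrreducible φ) (A : Matrix I I ℂ) :
    ∑ g, φ g * A * φ g⁻¹ = ((Fintype.card G : ℂ) * A.trace / Fintype.card I) • 1 := by
  set M := ∑ g, φ g * A * φ g⁻¹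
  have hcomm : ∀ h, Commute (φ h) M := by
    intro h
    simp only [Commute, SemiconjBy, M, Finset.mul_sum, Finset.sum_mul]
    refine Fintype.sum_bijective (h * ·) (Group.mulLeft_bijective h) _ _ fun g => ?_
    have hcancel : φ h⁻¹ * φ h = 1 := by rw [← map_mul, inv_mul_cancel, map_one]
    simp only [map_mul, mul_inv_rev, mul_assoc, hcancel, mul_one]
  obtain ⟨c, hc⟩ := hφ.eq_smul_one_of_commute hcomm
  have htrace : M.trace = Fintype.card G * A.trace := by
    simp only [M, Matrix.trace_sum, Matrix.trace_mul_cycle _ A, ← map_mul, inv_mul_cancel,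
      map_one, one_mul, sum_const, card_univ, nsmul_eq_mul]
  rw [hc, Matrix.trace_smul, Matrix.trace_one, smul_eq_mul] at htrace
  rw [hc, ← htrace, mul_div_cancel_right₀ _ (Nat.cast_ne_zero.mpr Fintype.card_ne_zero)]

end MatRepIrreducible

section BlockIndicator

variable {R I ι : Type*} [Semiring R] [Fintype I] [DecidableEq I] [DecidableEq ι]
  (blk : I → ι) (β : ι)

def blockIndicator : Matrix I I R := Matrix.diagonal fun k => if blk k = β then 1 else 0

lemma trace_blockIndicator :
    (blockIndicator blk β : Matrix I I R).trace = Fintype.card {x // blk x = β} := by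
  simp [blockIndicator, Matrix.trace, Fintype.card_subtype]

lemma mul_blockIndicator_mul_apply (A B : Matrix I I R) (p r : I) :
    (A * blockIndicator blk β * B : Matrix I I R) p r =
      ∑ k ∈ univ.filter (blk · = β), A p k * B k r := by
  rw [Matrix.mul_apply, sum_filter]
  simp only [blockIndicator, Matrix.mul_diagonal, mul_ite, mul_one, mul_zero, ite_mul, zero_mul]

variable {blk} in
lemma commute_blockIndicator {A : Matrix I I R} (hA : ∀ p q, blk p ≠ blk q → A p q = 0) :
    Commute A (blockIndicator blk β) := by
  ext p q
  by_cases hpq : blk p = blk q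
  · simp [blockIndicator, hpq]
  · simp [blockIndicator, hA p q hpq]

end BlockIndicator

lemma sum_conj_eq_factorial_smul_sum_swap_conj {R I : Type*} [Semiring R] [Fintype I]
    [DecidableEq I] {m : ℕ} (φ : Perm (Fin (m + 1)) →* Matrix I I R) {A : Matrix I I R}
    (hA : ∀ τ, Commute (φ (embedLast τ)) A) :
    ∑ σ, φ σ * A * φ σ⁻¹ =
      m.factorial • ∑ a, φ (swap a (Fin.last m)) * A * φ (swap a (Fin.last m)) := by
  rw [sum_perm_eq_sum_swap_last_mul_embedLast, Finset.smul_sum]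
  refine Finset.sum_congr rfl fun a _ => ?_
  have hcoset : ∀ τ, φ (swap a (Fin.last m) * embedLast τ) * A *
      φ (swap a (Fin.last m) * embedLast τ)⁻¹ =
      φ (swap a (Fin.last m)) * A * φ (swap a (Fin.last m)) := by
    intro τ
    have hinv : (swap a (Fin.last m) * embedLast τ)⁻¹ = embedLast τ⁻¹ * swap a (Fin.last m) := by
      rw [mul_inv_rev, swap_inv, embedLast_inv]
    have hfix : φ (embedLast τ) * A * φ (embedLast τ⁻¹) = A := by
      rw [(hA τ).eq, mul_assoc, ← map_mul, embedLast_inv, mul_inv_cancel, map_one, mul_one]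
    conv_rhs => rw [← hfix]
    simp only [hinv, map_mul, mul_assoc]
  simp only [hcoset, sum_const, card_univ, Fintype.card_perm, Fintype.card_fin]

theorem stmt16_general (m : ℕ) {I ι : Type*} [Fintype I] [DecidableEq I] [DecidableEq ι]
    (φ : Equiv.Perm (Fin (m + 1)) →* Matrix I I ℂ)
    (hirr : MatRepIrreducible φ)
    (blk : I → ι)
    (hblock : ∀ (π : Equiv.Perm (Fin m)) (p q : I),
        blk p ≠ blk q → φ (embedLast π) p q = 0)
    (β : ι) (p r : I) :
    ∑ a : Fin (m + 1),
        ∑ k ∈ Finset.univ.filter (fun k : I => blk k = β),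
          φ (Equiv.swap a (Fin.last m)) p k * φ (Equiv.swap a (Fin.last m)) k r
      = ((m : ℂ) + 1) *
          ((Fintype.card {x : I // blk x = β} : ℂ) / (Fintype.card I : ℂ)) *
          (if p = r then 1 else 0) := by
  have : Nonempty I := ⟨p⟩
  have hsum := hirr.sum_conj_eq_smul_one (blockIndicator blk β)
  rw [sum_conj_eq_factorial_smul_sum_swap_conj φ fun τ => commute_blockIndicator β (hblock τ),
    trace_blockIndicator, Fintype.card_perm, Fintype.card_fin, Nat.factorial_succ] at hsum
  have hentry := congrFun (congrFun hsum p) r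
  simp only [Matrix.smul_apply, Matrix.sum_apply, mul_blockIndicator_mul_apply,
    Matrix.one_apply, nsmul_eq_mul, smul_eq_mul] at hentry
  have hm : (m.factorial : ℂ) ≠ 0 := Nat.cast_ne_zero.mpr (Nat.factorial_ne_zero m)
  apply mul_left_cancel₀ hm
  rw [hentry]
  push_cast
  ring

/-- PRIR bilinear sum rule: In the partially reduced basis (with `n = m+1`),
for all blocks `α, β, γ ∈ μ`, indices `i` in block `α` and `j` in block `γ` (stated below
entrywise, for all `p, r : I` with the inner index `k` running over block `β`):
`Σ_{a=1}^{n} Σ_k (φ^μ_R)^{αβ}_{ik}((a,n))·(φ^μ_R)^{βγ}_{kj}((a,n))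
   = n·(d_β/d_μ)·δ^{αγ}·δ_{ij}`. -/
theorem stmt16 (m : ℕ) {I ι : Type*} [Fintype I] [DecidableEq I] [DecidableEq ι]
    (φ : Equiv.Perm (Fin (m + 1)) →* Matrix I I ℂ)
    (hunit : ∀ g, φ g ∈ Matrix.unitaryGroup I ℂ)
    (hirr : MatRepIrreducible φ)
    (blk : I → ι)
    (ψ : ∀ α : ι, Equiv.Perm (Fin m) →*
        Matrix {p : I // blk p = α} {p : I // blk p = α} ℂ)
    (hirrψ : ∀ α : ι, MatRepIrreducible (ψ α))
    (hblock : ∀ (π : Equiv.Perm (Fin m)) (p q : I),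
        blk p ≠ blk q → φ (embedLast π) p q = 0)
    (hdiag : ∀ (π : Equiv.Perm (Fin m)) (α : ι) (p q : {x : I // blk x = α}),
        φ (embedLast π) p.val q.val = ψ α π p q)
    (β : ι) (p r : I) :
    ∑ a : Fin (m + 1),
        ∑ k ∈ Finset.univ.filter (fun k : I => blk k = β),
          φ (Equiv.swap a (Fin.last m)) p k * φ (Equiv.swap a (Fin.last m)) k r
      = ((m : ℂ) + 1) *
          ((Fintype.card {x : I // blk x = β} : ℂ) / (Fintype.card I : ℂ)) *
          (if p = r then 1 else 0) :=
  stmt16_general m φ hirr blk hblock β p r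
end

section
/- Consequently, for every α ∈ μ and every a ∈ {1,…,n-1}: Tr[(φ^μ_R)^{αα}((a,n))] = (n/2)·(d_α/d_μ)·χ^μ(12) − ((n-2)/2)·χ^α(12). -/
/-!
Let `S = ∑_{i,j} φ((i j))` be the sum of `φ` over all ordered pairs, with `(i i) = 1`. It is a
class sum, so by Schur's lemma `S = c • 1`. Taking the trace of `S` gives
`c d_μ = n d_μ + n(n-1) χ^μ(12)`, and taking the trace of its `αα`-block gives
`c d_α = n d_α + (n-1)(n-2) χ^α(12) + 2(n-1) T`, where `T` is the common trace of the blocks at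
the transpositions `(a n)`: these are conjugate under `S(n-1)`, whose image is block diagonal.
Eliminating `c` yields `T`.
-/

open Matrix

theorem MatRepIrreducible.exists_eq_smul_one_of_commute {G I : Type*} [Monoid G] [Fintype I]
    [DecidableEq I] [Nonempty I] {φ : G →* Matrix I I ℂ} (hirr : MatRepIrreducible φ)
    (M : Matrix I I ℂ) (hcomm : ∀ g, M * φ g = φ g * M) : ∃ c : ℂ, M = c • 1 := by
  obtain ⟨c, hc⟩ := Module.End.exists_eigenvalue (mulVecLin M)
  obtain ⟨v, hv⟩ := hc.exists_hasEigenvector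
  have hinv : ∀ g : G, ∀ w ∈ Module.End.eigenspace (mulVecLin M) c,
      (φ g).mulVec w ∈ Module.End.eigenspace (mulVecLin M) c := by
    intro g w hw
    rw [Module.End.mem_eigenspace_iff, mulVecLin_apply] at hw ⊢
    rw [mulVec_mulVec, hcomm, ← mulVec_mulVec, hw, mulVec_smul]
  rcases hirr _ hinv with h | h
  · exact absurd (h ▸ hv.1 : v ∈ (⊥ : Submodule ℂ (I → ℂ))) (by simpa using hv.2)
  · refine ⟨c, ?_⟩
    ext i j
    have hj : (Pi.single j 1 : I → ℂ) ∈ Module.End.eigenspace (mulVecLin M) c := by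
      rw [h]; trivial
    rw [Module.End.mem_eigenspace_iff, mulVecLin_apply] at hj
    simpa [one_apply, Pi.single_apply, eq_comm] using congrFun hj i

theorem embedLast_swap {m : ℕ} (a b : Fin m) :
    embedLast (Equiv.swap a b) = Equiv.swap a.castSucc b.castSucc := by
  ext x : 1
  induction x using Fin.lastCases with
  | last =>
    rw [embedLast, Equiv.Perm.viaFintypeEmbedding_apply_notMem_range _ _ (by simp),
      Equiv.swap_apply_of_ne_of_ne (Fin.castSucc_lt_last a).ne' (Fin.castSucc_lt_last b).ne']
  | cast y =>
    exact (Equiv.Perm.viaFintypeEmbedding_apply_image (Equiv.swap a b) Fin.castSuccEmb y).trans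
      ((Fin.castSucc_injective m).map_swap a b y)

theorem trace_map_eq_of_isConj {G J R : Type*} [Group G] [Fintype J] [DecidableEq J] [CommRing R]
    (ρ : G →* Matrix J J R) {s t : G} (h : IsConj s t) : trace (ρ s) = trace (ρ t) := by
  obtain ⟨c, rfl⟩ := isConj_iff.mp h
  rw [map_mul, map_mul, trace_mul_cycle, ← map_mul, inv_mul_cancel, map_one, one_mul]

theorem trace_map_swap_eq {γ J R : Type*} [DecidableEq γ] [Fintype J] [DecidableEq J] [CommRing R]
    (ρ : Equiv.Perm γ →* Matrix J J R) {w x y z : γ} (hwx : w ≠ x) (hyz : y ≠ z) :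
    trace (ρ (Equiv.swap w x)) = trace (ρ (Equiv.swap y z)) :=
  trace_map_eq_of_isConj ρ (Equiv.Perm.isConj_swap hwx hyz)

theorem Finset.sum_sum_eq_of_diag_of_offDiag {γ R : Type*} [Fintype γ] [CommRing R]
    (f : γ → γ → R) {x y : R} (hdiag : ∀ i, f i i = x) (hoff : ∀ i j, i ≠ j → f i j = y) :
    ∑ i, ∑ j, f i j = Fintype.card γ * (x + (Fintype.card γ - 1) * y) := by
  classical
  have hrow : ∀ i, ∑ j, f i j = x + (Fintype.card γ - 1) * y := fun i => by
    rw [← Finset.add_sum_erase _ _ (Finset.mem_univ i), hdiag,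
      Finset.sum_congr rfl fun j hj => hoff i j (Finset.ne_of_mem_erase hj).symm,
      Finset.sum_const, Finset.card_erase_of_mem (Finset.mem_univ i), Finset.card_univ,
      nsmul_eq_mul, Nat.cast_pred (Fintype.card_pos_iff.mpr ⟨i⟩)]
  simp only [hrow, Finset.sum_const, Finset.card_univ, nsmul_eq_mul]

section SwapClassSum

variable {γ J : Type*} [DecidableEq γ] [Fintype γ] [Fintype J] [DecidableEq J]

def swapClassSum {R : Type*} [Semiring R] (ρ : Equiv.Perm γ →* Matrix J J R) : Matrix J J R :=
  ∑ i, ∑ j, ρ (Equiv.swap i j)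

theorem swapClassSum_mul_comm {R : Type*} [Semiring R] (ρ : Equiv.Perm γ →* Matrix J J R)
    (g : Equiv.Perm γ) : swapClassSum ρ * ρ g = ρ g * swapClassSum ρ := by
  have hconj : ∀ i j, ρ g * ρ (Equiv.swap i j) = ρ (Equiv.swap (g i) (g j)) * ρ g :=
    fun i j => by
    rw [← map_mul, ← map_mul, Equiv.swap_apply_apply, inv_mul_cancel_right]
  simp only [swapClassSum, Finset.sum_mul, Finset.mul_sum, hconj]
  refine (Fintype.sum_equiv g _ _ fun i => ?_).symm
  exact Equiv.sum_comp g fun j => ρ (Equiv.swap (g i) j) * ρ g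

theorem trace_swapClassSum {R : Type*} [CommRing R] (ρ : Equiv.Perm γ →* Matrix J J R)
    {x y : γ} (hxy : x ≠ y) :
    trace (swapClassSum ρ) =
      Fintype.card γ * (Fintype.card J + (Fintype.card γ - 1) * trace (ρ (Equiv.swap x y))) := by
  simp only [swapClassSum, trace_sum]
  refine Finset.sum_sum_eq_of_diag_of_offDiag _ (fun i => ?_) fun i j hij =>
    trace_map_swap_eq ρ hij hxy
  rw [Equiv.swap_self, ← Equiv.Perm.one_def, map_one, trace_one]

end SwapClassSum

section Blocks

variable {I ι : Type*} (blk : I → ι)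

theorem blkOf_smul (c : ℂ) (A : Matrix I I ℂ) (α β : ι) :
    blkOf blk (c • A) α β = c • blkOf blk A α β :=
  rfl

theorem blkOf_one [DecidableEq I] (α : ι) : blkOf blk (1 : Matrix I I ℂ) α α = 1 := by
  ext p q
  simp [blkOf, one_apply, Subtype.ext_iff]

variable [Fintype I] [DecidableEq ι]

theorem trace_blkOf_sum {κ : Type*} (s : Finset κ) (F : κ → Matrix I I ℂ) (α : ι) :
    trace (blkOf blk (∑ k ∈ s, F k) α α) = ∑ k ∈ s, trace (blkOf blk (F k) α α) := by
  simp only [trace, diag, blkOf, of_apply, Matrix.sum_apply]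
  exact Finset.sum_comm

theorem blkOf_mul_of_left {A : Matrix I I ℂ} (hA : ∀ p q, blk p ≠ blk q → A p q = 0)
    (B : Matrix I I ℂ) (α β : ι) :
    blkOf blk (A * B) α β = blkOf blk A α α * blkOf blk B α β := by
  ext p q
  have hout : ∑ r : {r // blk r ≠ α}, A p r * B r q = 0 :=
    Fintype.sum_eq_zero _ fun r => by rw [hA _ _ fun h => r.2 (h.symm.trans p.2), zero_mul]
  rw [blkOf, of_apply, mul_apply, ← Fintype.sum_subtype_add_sum_subtype (blk · = α), hout,
    add_zero]
  rfl

theorem blkOf_mul_of_right (A : Matrix I I ℂ) {B : Matrix I I ℂ}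
    (hB : ∀ p q, blk p ≠ blk q → B p q = 0) (α β : ι) :
    blkOf blk (A * B) α β = blkOf blk A α β * blkOf blk B β β := by
  ext p q
  have hout : ∑ r : {r // blk r ≠ β}, A p r * B r q = 0 :=
    Fintype.sum_eq_zero _ fun r => by rw [hB _ _ fun h => r.2 (h.trans q.2), mul_zero]
  rw [blkOf, of_apply, mul_apply, ← Fintype.sum_subtype_add_sum_subtype (blk · = β), hout,
    add_zero]
  rfl

theorem trace_blkOf_mul_mul_of_blockDiag [DecidableEq I] {P Q : Matrix I I ℂ}
    (hP : ∀ p q, blk p ≠ blk q → P p q = 0) (hQ : ∀ p q, blk p ≠ blk q → Q p q = 0) {α : ι}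
    (hQP : blkOf blk Q α α * blkOf blk P α α = 1) (X : Matrix I I ℂ) :
    trace (blkOf blk (P * X * Q) α α) = trace (blkOf blk X α α) := by
  rw [blkOf_mul_of_right blk _ hQ, blkOf_mul_of_left blk hP, trace_mul_cycle, hQP, one_mul]

end Blocks

section BranchingBlocks

variable {m : ℕ} {I ι : Type*} [Fintype I] [DecidableEq I] [DecidableEq ι]
  {φ : Equiv.Perm (Fin (m + 1)) →* Matrix I I ℂ} {blk : I → ι}
  {ψ : ∀ α : ι, Equiv.Perm (Fin m) →* Matrix {p : I // blk p = α} {p : I // blk p = α} ℂ}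

theorem blkOf_map_embedLast
    (hdiag : ∀ (π : Equiv.Perm (Fin m)) (α : ι) (p q : {x : I // blk x = α}),
      φ (embedLast π) p.val q.val = ψ α π p q)
    (π : Equiv.Perm (Fin m)) (α : ι) :
    blkOf blk (φ (embedLast π)) α α = ψ α π := by
  ext p q
  exact hdiag π α p q

theorem trace_blkOf_swap_castSucc_last_eq
    (hblock : ∀ (π : Equiv.Perm (Fin m)) (p q : I), blk p ≠ blk q → φ (embedLast π) p q = 0)
    (hdiag : ∀ (π : Equiv.Perm (Fin m)) (α : ι) (p q : {x : I // blk x = α}),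
      φ (embedLast π) p.val q.val = ψ α π p q)
    (α : ι) (a b : Fin m) :
    trace (blkOf blk (φ (Equiv.swap b.castSucc (Fin.last m))) α α) =
      trace (blkOf blk (φ (Equiv.swap a.castSucc (Fin.last m))) α α) := by
  set e := embedLast (Equiv.swap b a)
  have he : e = Equiv.swap b.castSucc a.castSucc := embedLast_swap b a
  have hconj : Equiv.swap b.castSucc (Fin.last m) = e * Equiv.swap a.castSucc (Fin.last m) * e :=
    calc Equiv.swap b.castSucc (Fin.last m) = Equiv.swap (e a.castSucc) (e (Fin.last m)) := by
          rw [he, Equiv.swap_apply_right, Equiv.swap_apply_of_ne_of_ne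
            (Fin.castSucc_lt_last b).ne' (Fin.castSucc_lt_last a).ne']
      _ = e * Equiv.swap a.castSucc (Fin.last m) * e⁻¹ := Equiv.swap_apply_apply _ _ _
      _ = e * Equiv.swap a.castSucc (Fin.last m) * e := by rw [he, Equiv.swap_inv]
  rw [hconj, map_mul, map_mul, trace_blkOf_mul_mul_of_blockDiag blk (hblock _) (hblock _)]
  rw [blkOf_map_embedLast hdiag, ← map_mul, Equiv.swap_mul_self, map_one]

theorem trace_blkOf_swap_castSucc
    (hdiag : ∀ (π : Equiv.Perm (Fin m)) (α : ι) (p q : {x : I // blk x = α}),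
      φ (embedLast π) p.val q.val = ψ α π p q)
    (α : ι) {b c b' c' : Fin m} (hbc : b ≠ c) (hbc' : b' ≠ c') :
    trace (blkOf blk (φ (Equiv.swap b.castSucc c.castSucc)) α α) =
      trace (ψ α (Equiv.swap b' c')) := by
  rw [← embedLast_swap, blkOf_map_embedLast hdiag, trace_map_swap_eq (ψ α) hbc hbc']

theorem trace_blkOf_swapClassSum
    (hblock : ∀ (π : Equiv.Perm (Fin m)) (p q : I), blk p ≠ blk q → φ (embedLast π) p q = 0)
    (hdiag : ∀ (π : Equiv.Perm (Fin m)) (α : ι) (p q : {x : I // blk x = α}),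
      φ (embedLast π) p.val q.val = ψ α π p q)
    (α : ι) (a : Fin m) {b c : Fin m} (hbc : b ≠ c) :
    trace (blkOf blk (swapClassSum φ) α α) =
      ((m : ℂ) + 1) * Fintype.card {p : I // blk p = α}
        + m * ((m : ℂ) - 1) * trace (ψ α (Equiv.swap b c))
        + 2 * m * trace (blkOf blk (φ (Equiv.swap a.castSucc (Fin.last m))) α α) := by
  set T := trace (blkOf blk (φ (Equiv.swap a.castSucc (Fin.last m))) α α)
  have hself : ∀ i,
      trace (blkOf blk (φ (Equiv.swap i i)) α α) = Fintype.card {p : I // blk p = α} :=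
    fun i => by rw [Equiv.swap_self, ← Equiv.Perm.one_def, map_one, blkOf_one, trace_one]
  have hcast : ∑ b' : Fin m, ∑ c' : Fin m,
      trace (blkOf blk (φ (Equiv.swap b'.castSucc c'.castSucc)) α α) =
        m * (Fintype.card {p : I // blk p = α} + (m - 1) * trace (ψ α (Equiv.swap b c))) := by
    simpa using Finset.sum_sum_eq_of_diag_of_offDiag _ (fun i => hself _)
      fun i j hij => trace_blkOf_swap_castSucc hdiag α hij hbc
  have hlast : ∀ b' : Fin m,
      trace (blkOf blk (φ (Equiv.swap b'.castSucc (Fin.last m))) α α) = T :=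
    trace_blkOf_swap_castSucc_last_eq hblock hdiag α a
  have hlast' : ∀ b' : Fin m,
      trace (blkOf blk (φ (Equiv.swap (Fin.last m) b'.castSucc)) α α) = T :=
    fun b' => by rw [Equiv.swap_comm, hlast]
  simp only [swapClassSum, trace_blkOf_sum]
  simp only [Fin.sum_univ_castSucc, Finset.sum_add_distrib, hcast,
    hlast, hlast', hself, Finset.sum_const, Finset.card_univ, Fintype.card_fin, nsmul_eq_mul]
  ring

end BranchingBlocks

/-- PRIR block trace: In the partially reduced basis (with `n = m+1`), for
every `α ∈ μ` and every `a ∈ {1,…,n-1}`: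
`Tr[(φ^μ_R)^{αα}((a,n))] = (n/2)·(d_α/d_μ)·χ^μ(12) − ((n-2)/2)·χ^α(12)`. -/
theorem stmt17 (m : ℕ) (hm : 2 ≤ m) {I ι : Type*} [Fintype I] [DecidableEq I] [DecidableEq ι]
    (φ : Equiv.Perm (Fin (m + 1)) →* Matrix I I ℂ)
    (hirr : MatRepIrreducible φ)
    (blk : I → ι)
    (ψ : ∀ α : ι, Equiv.Perm (Fin m) →*
        Matrix {p : I // blk p = α} {p : I // blk p = α} ℂ)
    (hblock : ∀ (π : Equiv.Perm (Fin m)) (p q : I),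
        blk p ≠ blk q → φ (embedLast π) p q = 0)
    (hdiag : ∀ (π : Equiv.Perm (Fin m)) (α : ι) (p q : {x : I // blk x = α}),
        φ (embedLast π) p.val q.val = ψ α π p q)
    (α : ι) (a : Fin m) :
    Matrix.trace (blkOf blk (φ (Equiv.swap a.castSucc (Fin.last m))) α α)
      = (((m : ℂ) + 1) / 2) *
          ((Fintype.card {p : I // blk p = α} : ℂ) / (Fintype.card I : ℂ)) *
          Matrix.trace (φ (Equiv.swap (⟨0, by omega⟩ : Fin (m + 1)) ⟨1, by omega⟩))
        - (((m : ℂ) - 1) / 2) *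
            Matrix.trace (ψ α (Equiv.swap (⟨0, by omega⟩ : Fin m) ⟨1, by omega⟩)) := by
  rcases isEmpty_or_nonempty I with hI | hI
  · simp [trace]
  obtain ⟨c, hc⟩ := hirr.exists_eq_smul_one_of_commute _ (swapClassSum_mul_comm φ)
  have hμ := trace_swapClassSum φ (x := ⟨0, by omega⟩) (y := ⟨1, by omega⟩)
    (by simp [Fin.ext_iff])
  have hα := trace_blkOf_swapClassSum hblock hdiag α a (b := ⟨0, by omega⟩) (c := ⟨1, by omega⟩)
    (by simp [Fin.ext_iff])
  rw [hc, trace_smul, trace_one, Fintype.card_fin, smul_eq_mul, Nat.cast_succ] at hμ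
  rw [hc, blkOf_smul, blkOf_one, trace_smul, trace_one, smul_eq_mul] at hα
  have hm0 : (m : ℂ) ≠ 0 := Nat.cast_ne_zero.mpr (by omega)
  have hd : (Fintype.card I : ℂ) ≠ 0 := Nat.cast_ne_zero.mpr Fintype.card_ne_zero
  field_simp
  apply mul_left_cancel₀ hm0
  linear_combination (Fintype.card {p : I // blk p = α} : ℂ) * hμ - (Fintype.card I : ℂ) * hα
end
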